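/- (Completeness of natural deduction for M⊃) If Δ ⊨ β with respect to Kripke semantics for M⊃, where Δ is a finite set of M⊃ formulas and β an M⊃ formula, then there exists a natural deduction derivation in M⊃ of β whose set of open assumptions is some subset Δ′ ⊆ Δ. In particular, every tautology of M⊃ has a natural deduction proof. -/

import Mathlib

/-- Formulas of minimal implicational logic M⊃. -/
inductive MFormula : Type
  | var : ℕ → MFormula
  | imp : MFormula → MFormula → MFormula
deriving DecidableEq

namespace MFormula

/-- Size of a formula: number of vertices of its syntax tree. -/
def size : MFormula → ℕ
  | .var _ => 1
  | .imp a b => a.size + b.size + 1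

/-- Subformula relation. -/
inductive Subf : MFormula → MFormula → Prop
  | refl (t : MFormula) : Subf t t
  | impL {s a b : MFormula} : Subf s a → Subf s (imp a b)
  | impR {s a b : MFormula} : Subf s b → Subf s (imp a b)

/-- The finite set of subformulas of a formula. -/
def subformulas : MFormula → Finset MFormula
  | .var n => {.var n}
  | .imp a b => insert (imp a b) (a.subformulas ∪ b.subformulas)

end MFormula

/-- Natural deduction derivation trees for M⊃.  A leaf is an assumption
occurrence, carrying its formula and `none` if it stays open, or `some n`
if it is discharged by the `n`-th ⊃-Intro application below it (de Bruijn
style, counting enclosing ⊃-Intro applications from the leaf downwards).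
`elim a b` applies ⊃-Elim with minor premise `a` and major premise `b`;
`intro A t` applies ⊃-Intro discharging (the marked occurrences of) `A`. -/
inductive NDTree : Type
  | leaf : MFormula → Option ℕ → NDTree
  | elim : NDTree → NDTree → NDTree
  | intro : MFormula → NDTree → NDTree
deriving DecidableEq

namespace NDTree

/-- Conclusion of a derivation tree relative to the list of formulas
introduced by enclosing ⊃-Intro applications (innermost first);
`none` if the tree is not a well-formed derivation. -/
def concl : NDTree → List MFormula → Option MFormula
  | .leaf A none, _ => some A
  | .leaf A (some n), ctx => if ctx[n]? = some A then some A else none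
  | .elim a b, ctx =>
      match concl a ctx, concl b ctx with
      | some x, some (.imp p q) => if p = x then some q else none
      | _, _ => none
  | .intro A t, ctx => (concl t (A :: ctx)).map (fun B => MFormula.imp A B)

/-- Size of a derivation: its number of nodes. -/
def size : NDTree → ℕ
  | .leaf _ _ => 1
  | .elim a b => a.size + b.size + 1
  | .intro _ t => t.size + 1

/-- Height of a derivation: maximal number of edges on a root-to-leaf path. -/
def height : NDTree → ℕ
  | .leaf _ _ => 0
  | .elim a b => max a.height b.height + 1
  | .intro _ t => t.height + 1

/-- Open assumptions of a subtree sitting below `d` of its own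
⊃-Intro applications (at top level `d = 0`): leaves discharged by no
⊃-Intro of the subtree itself. -/
def openAssumAux : NDTree → ℕ → Finset MFormula
  | .leaf A none, _ => {A}
  | .leaf A (some n), d => if d ≤ n then {A} else ∅
  | .elim a b, d => openAssumAux a d ∪ openAssumAux b d
  | .intro _ t, d => openAssumAux t (d + 1)

/-- The set of open (undischarged) assumptions of a derivation. -/
def openAssum (t : NDTree) : Finset MFormula := openAssumAux t 0

/-- A derivation is normal if no formula occurrence is simultaneously the
conclusion of a ⊃-Intro and the major premise of a ⊃-Elim. -/
def Normal : NDTree → Prop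
  | .leaf _ _ => True
  | .elim a b => Normal a ∧ Normal b ∧ ∀ A u, b ≠ .intro A u
  | .intro _ t => Normal t

/-- `T` is a proof of `α`: a derivation with conclusion `α` and
no open assumptions. -/
def IsProofOf (t : NDTree) (α : MFormula) : Prop :=
  concl t [] = some α ∧ openAssum t = ∅

/-- A normal derivation (in context `ctx`) is expanded if every minimal
formula, i.e. every formula occurrence that is both the conclusion of a
⊃-Elim and the premise of a ⊃-Intro, is a propositional variable. -/
def Expanded : NDTree → List MFormula → Prop
  | .leaf _ _, _ => True
  | .elim a b, ctx => Expanded a ctx ∧ Expanded b ctx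
  | .intro A t, ctx => Expanded t (A :: ctx) ∧
      (∀ u v, t = .elim u v → ∃ i, concl t (A :: ctx) = some (.var i))

/-- `Subtree s t`: `s` is a sub-derivation (a node of `t` together with
everything above it) of `t`. -/
inductive Subtree : NDTree → NDTree → Prop
  | refl (t : NDTree) : Subtree t t
  | elimL {s a b : NDTree} : Subtree s a → Subtree s (.elim a b)
  | elimR {s a b : NDTree} : Subtree s b → Subtree s (.elim a b)
  | intro {s : NDTree} {A : MFormula} {t : NDTree} : Subtree s t → Subtree s (.intro A t)

/-- Number of instances (sub-derivation occurrences identical to `s`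
as labeled trees) of `s` in a derivation. -/
def countInst (s : NDTree) : NDTree → ℕ
  | .leaf A o => if NDTree.leaf A o = s then 1 else 0
  | .elim a b => (if NDTree.elim a b = s then 1 else 0) + countInst s a + countInst s b
  | .intro A t => (if NDTree.intro A t = s then 1 else 0) + countInst s t

/-- Number of instances of `s` occurring at level (distance from the root) `μ`. -/
def countInstAt (s : NDTree) : NDTree → ℕ → ℕ
  | t, 0 => if t = s then 1 else 0
  | .leaf _ _, _ + 1 => 0
  | .elim a b, n + 1 => countInstAt s a n + countInstAt s b n
  | .intro _ t, n + 1 => countInstAt s t n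

/-- `OccAt T ctx s ctx'` : `s` occurs in `T` (whose own context is `ctx`)
as a node-with-everything-above-it, with enclosing-intro context `ctx'`. -/
inductive OccAt : NDTree → List MFormula → NDTree → List MFormula → Prop
  | refl (t : NDTree) (ctx : List MFormula) : OccAt t ctx t ctx
  | elimL {T : NDTree} {ctx : List MFormula} {a b : NDTree} {ctx' : List MFormula} :
      OccAt T ctx (.elim a b) ctx' → OccAt T ctx a ctx'
  | elimR {T : NDTree} {ctx : List MFormula} {a b : NDTree} {ctx' : List MFormula} :
      OccAt T ctx (.elim a b) ctx' → OccAt T ctx b ctx'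
  | intro {T : NDTree} {ctx : List MFormula} {A : MFormula} {t : NDTree} {ctx' : List MFormula} :
      OccAt T ctx (.intro A t) ctx' → OccAt T ctx t (A :: ctx')

/-- Each node of a derivation lies on a unique branch; branches are in
bijection with their endpoints: the root of the derivation and the minor
premises of ⊃-Elim applications. -/
def IsBranchEndpoint (T s : NDTree) (ctx : List MFormula) : Prop :=
  (s = T ∧ ctx = []) ∨ ∃ u, OccAt T [] (NDTree.elim s u) ctx

/-- The (top-down) sequence of formulas of the branch ending at the root of
the given subtree: trace upwards through premises of ⊃-Intro and major
premises of ⊃-Elim up to a top-formula. -/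
def branchSeq : NDTree → List MFormula → Option (List MFormula)
  | .leaf A o, ctx => (concl (.leaf A o) ctx).map (fun c => [c])
  | .elim a b, ctx =>
      match branchSeq b ctx, concl (.elim a b) ctx with
      | some l, some c => some (l ++ [c])
      | _, _ => none
  | .intro A t, ctx =>
      match branchSeq t (A :: ctx), concl (.intro A t) ctx with
      | some l, some c => some (l ++ [c])
      | _, _ => none

/-- The (top-down) E-part of the branch ending at the root of the given
subtree: the top-formula and the successive conclusions of major-premise
⊃-Elim steps, ending at the minimal formula of the branch. -/
def epart : NDTree → List MFormula → Option (List MFormula)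
  | .leaf A o, ctx => (concl (.leaf A o) ctx).map (fun c => [c])
  | .elim a b, ctx =>
      match epart b ctx, concl (.elim a b) ctx with
      | some l, some c => some (l ++ [c])
      | _, _ => none
  | .intro A t, ctx => epart t (A :: ctx)

/-- Number of ⊃-Intro applications forming the I-part at the bottom of a
branch endpoint subtree. -/
def introCount : NDTree → ℕ
  | .intro _ t => introCount t + 1
  | _ => 0

/-- Count of branch endpoints strictly inside the given subtree (i.e. minor
premises of ⊃-Elim) whose branch has formula sequence `b`. -/
def brCount (b : List MFormula) : NDTree → List MFormula → ℕ
  | .leaf _ _, _ => 0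
  | .elim a c, ctx =>
      (if branchSeq a ctx = some b then 1 else 0) + brCount b a ctx + brCount b c ctx
  | .intro A t, ctx => brCount b t (A :: ctx)

/-- Total number of branches of `T` whose formula sequence is `b`. -/
def brTotal (b : List MFormula) (T : NDTree) : ℕ :=
  (if branchSeq T [] = some b then 1 else 0) + brCount b T []

/-- Count of branch endpoints strictly inside the given subtree (whose root
is at level `d` of the ambient derivation) whose branch has formula
sequence `b` and whose minimal formula occurs at level `μ`. -/
def brMinCount (b : List MFormula) (μ : ℕ) : NDTree → List MFormula → ℕ → ℕ
  | .leaf _ _, _, _ => 0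
  | .elim a c, ctx, d =>
      (if branchSeq a ctx = some b ∧ d + 1 + introCount a = μ then 1 else 0)
      + brMinCount b μ a ctx (d + 1) + brMinCount b μ c ctx (d + 1)
  | .intro A t, ctx, d => brMinCount b μ t (A :: ctx) (d + 1)

/-- Total number of branches of `T` with formula sequence `b` whose minimal
formula occurs at level `μ` of `T`. -/
def brMinTotal (b : List MFormula) (μ : ℕ) (T : NDTree) : ℕ :=
  (if branchSeq T [] = some b ∧ introCount T = μ then 1 else 0) + brMinCount b μ T [] 0

/-- No occurrence of `A` in the given subtree (sitting at intro-depth `d`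
below a fixed ⊃-Intro application) is an open assumption of the subtree
escaping that ⊃-Intro: every leaf labeled `A` is discharged by an
⊃-Intro at distance at most `d`. -/
def NoOpenBeyond (A : MFormula) : NDTree → ℕ → Prop
  | .leaf B o, d => B = A → ∃ n, o = some n ∧ n ≤ d
  | .elim a b, d => NoOpenBeyond A a d ∧ NoOpenBeyond A b d
  | .intro _ t, d => NoOpenBeyond A t (d + 1)

/-- Every ⊃-Intro application of the derivation is greedy: it discharges
all occurrences of its assumption that are open in the sub-derivation of
its premise. -/
def Greedy : NDTree → Prop
  | .leaf _ _ => True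
  | .elim a b => Greedy a ∧ Greedy b
  | .intro A t => NoOpenBeyond A t 0 ∧ Greedy t

/-- A matrix of `T`: a sub-derivation all of whose instances in `T` occur
at a single level. -/
def IsMatrix (s T : NDTree) : Prop :=
  Subtree s T ∧ ∃ μ, ∀ ν, 0 < countInstAt s T ν → ν = μ

end NDTree

/-- A Kripke model for M⊃: a preordered set of worlds with a monotone
valuation on propositional variables. -/
structure KModel where
  World : Type
  le : World → World → Prop
  le_refl : ∀ w, le w w
  le_trans : ∀ {a b c}, le a b → le b c → le a c
  val : World → ℕ → Prop
  mono : ∀ {w w'}, le w w' → ∀ p, val w p → val w' p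

/-- Kripke satisfaction for M⊃. -/
def KSat (M : KModel) : MFormula → M.World → Prop
  | .var p, w => M.val w p
  | .imp a b, w => ∀ w', M.le w w' → KSat M a w' → KSat M b w'

/-- Semantic entailment: every world of every Kripke model satisfying all
of `Δ` satisfies `β`. -/
def KEntails (Δ : Set MFormula) (β : MFormula) : Prop :=
  ∀ (M : KModel) (w : M.World), (∀ δ ∈ Δ, KSat M δ w) → KSat M β w

/-! The proof is the canonical-model argument. Worlds of the canonical model are sets Γ of
formulas, ordered by inclusion, and a variable holds at Γ iff it is derivable from Γ. By
induction on formulas, Γ ⊩ A iff Γ ⊢ A: for `A ⊃ B`, extending Γ by `A` and applying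
⊃-Intro gives one direction, ⊃-Elim the other. Evaluating a semantic consequence of Δ at the
world Δ then yields a derivation from Δ. -/

namespace NDTree

/-- Turns the open leaves labelled `A` into leaves discharged by the ⊃-Intro lying `d`
⊃-Intro applications below the root. -/
def discharge (A : MFormula) : NDTree → ℕ → NDTree
  | .leaf B none, d => if B = A then .leaf B (some d) else .leaf B none
  | .leaf B (some n), _ => .leaf B (some n)
  | .elim a b, d => .elim (discharge A a d) (discharge A b d)
  | .intro C t, d => .intro C (discharge A t (d + 1))

lemma lt_length_of_concl_leaf_ne_none {A : MFormula} {n : ℕ} {ctx : List MFormula}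
    (h : (leaf A (some n)).concl ctx ≠ none) : n < ctx.length := by
  by_contra hn
  simp [concl, List.getElem?_eq_none (not_lt.mp hn)] at h

lemma concl_append {T : NDTree} {ctx : List MFormula} {β : MFormula}
    (h : T.concl ctx = some β) (ext : List MFormula) : T.concl (ctx ++ ext) = some β := by
  induction T generalizing ctx β with
  | leaf A o =>
    rcases o with _ | n
    · exact h
    · have hn := lt_length_of_concl_leaf_ne_none (h ▸ Option.some_ne_none β)
      simpa only [concl, List.getElem?_append_left hn] using h
  | elim a b iha ihb =>
    simp only [concl] at h ⊢
    cases ha : a.concl ctx <;> cases hb : b.concl ctx <;> simp only [ha, hb, reduceCtorEq] at h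
    rw [iha ha, ihb hb]
    exact h
  | intro A t ih =>
    simp only [concl] at h ⊢
    cases ht : t.concl (A :: ctx) <;> simp only [ht, Option.map_none, reduceCtorEq] at h
    rw [← List.cons_append, ih ht]
    exact h

lemma concl_discharge (A : MFormula) (T : NDTree) {d : ℕ} {ctx : List MFormula}
    (hd : ctx[d]? = some A) : (T.discharge A d).concl ctx = T.concl ctx := by
  induction T generalizing d ctx with
  | leaf B o =>
    rcases o with _ | n
    · by_cases hBA : B = A
      · subst hBA
        simp [discharge, concl, hd]
      · simp [discharge, hBA]
    · rfl
  | elim a b iha ihb => simp only [discharge, concl, iha hd, ihb hd]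
  | intro C t ih =>
    simp only [discharge, concl, ih (show (C :: ctx)[d + 1]? = some A from hd)]

lemma openAssumAux_antitone (T : NDTree) : Antitone T.openAssumAux := by
  induction T with
  | leaf A o =>
    intro d e hde
    rcases o with _ | n
    · exact le_rfl
    · simp only [openAssumAux]
      split_ifs <;> first | exact le_rfl | exact Finset.empty_subset _ | omega
  | elim a b iha ihb => exact fun d e hde => Finset.union_subset_union (iha hde) (ihb hde)
  | intro C t ih => exact fun d e hde => ih (Nat.succ_le_succ hde)

/-- In a well-formed tree no leaf points below the context, so after discharging `A` at
depth `d` no occurrence of `A` stays open beyond that depth. -/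
lemma openAssumAux_discharge_subset (A : MFormula) (T : NDTree) {d : ℕ} {ctx : List MFormula}
    (hT : T.concl ctx ≠ none) (hlen : ctx.length ≤ d + 1) :
    (T.discharge A d).openAssumAux (d + 1) ⊆ T.openAssumAux (d + 1) \ {A} := by
  induction T generalizing d ctx with
  | leaf B o =>
    rcases o with _ | n
    · by_cases hBA : B = A
      · simp [discharge, openAssumAux, hBA]
      · simp [discharge, openAssumAux, hBA]
    · have hn := lt_length_of_concl_leaf_ne_none hT
      simp only [discharge, openAssumAux, if_neg (show ¬d + 1 ≤ n by omega)]
      exact Finset.empty_subset _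
  | elim a b iha ihb =>
    have ha : a.concl ctx ≠ none := fun h => hT (by simp [concl, h])
    have hb : b.concl ctx ≠ none := fun h => hT (by cases a.concl ctx <;> simp [concl, h])
    simp only [discharge, openAssumAux, Finset.union_sdiff_distrib]
    exact Finset.union_subset_union (iha ha hlen) (ihb hb hlen)
  | intro C t ih =>
    have ht : t.concl (C :: ctx) ≠ none := fun h => hT (by simp [concl, h])
    exact ih ht (by simpa using hlen)

end NDTree

def Derivable (Δ : Set MFormula) (β : MFormula) : Prop :=
  ∃ T : NDTree, T.concl [] = some β ∧ ↑T.openAssum ⊆ Δ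

namespace Derivable

variable {Δ Δ' : Set MFormula} {a b : MFormula}

lemma mono (h : Δ ⊆ Δ') (hd : Derivable Δ b) : Derivable Δ' b :=
  let ⟨T, hc, ho⟩ := hd
  ⟨T, hc, ho.trans h⟩

lemma of_mem (h : b ∈ Δ) : Derivable Δ b :=
  ⟨.leaf b none, rfl, by simpa [NDTree.openAssum, NDTree.openAssumAux] using h⟩

lemma elim (hab : Derivable Δ (.imp a b)) (ha : Derivable Δ a) : Derivable Δ b := by
  obtain ⟨S, hS, hSo⟩ := hab
  obtain ⟨T, hT, hTo⟩ := ha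
  refine ⟨.elim T S, by simp [NDTree.concl, hS, hT], ?_⟩
  simpa only [NDTree.openAssum, NDTree.openAssumAux, Finset.coe_union] using
    Set.union_subset hTo hSo

lemma intro (h : Derivable (insert a Δ) b) : Derivable Δ (.imp a b) := by
  obtain ⟨T, hT, hTo⟩ := h
  refine ⟨.intro a (T.discharge a 0), ?_, ?_⟩
  · have hc : (T.discharge a 0).concl [a] = some b := by
      rw [NDTree.concl_discharge a T (by simp)]
      exact NDTree.concl_append hT [a]
    simp [NDTree.concl, hc]
  · intro x hx
    obtain ⟨hxT, hxa⟩ := Finset.mem_sdiff.mp <|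
      NDTree.openAssumAux_discharge_subset a T (hT ▸ Option.some_ne_none b) (by simp) hx
    have hxΔ : x ∈ insert a Δ := hTo (T.openAssumAux_antitone (Nat.zero_le 1) hxT)
    exact hxΔ.resolve_left (by simpa using hxa)

end Derivable

def canonicalModel : KModel where
  World := Set MFormula
  le := (· ⊆ ·)
  le_refl := subset_refl
  le_trans := Set.Subset.trans
  val Γ p := Derivable Γ (.var p)
  mono h _ hp := hp.mono h

lemma kSat_canonicalModel_iff (A : MFormula) (Γ : Set MFormula) :
    KSat canonicalModel A Γ ↔ Derivable Γ A := by
  induction A generalizing Γ with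
  | var p => rfl
  | imp a b iha ihb =>
    constructor
    · intro h
      have ha : KSat canonicalModel a (insert a Γ : Set MFormula) :=
        (iha _).mpr (.of_mem (Set.mem_insert a Γ))
      exact .intro ((ihb _).mp (h (insert a Γ : Set MFormula) (Set.subset_insert a Γ) ha))
    · intro h Γ' hΓ ha
      exact (ihb _).mpr ((h.mono hΓ).elim ((iha _).mp ha))

lemma derivable_of_kEntails {Δ : Set MFormula} {β : MFormula} (h : KEntails Δ β) :
    Derivable Δ β :=
  (kSat_canonicalModel_iff β Δ).mp <|
    h canonicalModel Δ fun δ hδ => (kSat_canonicalModel_iff δ Δ).mpr (Derivable.of_mem hδ)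

/-- Completeness: if Δ ⊨ β (Δ finite) then β has a
derivation whose open assumptions form a subset of Δ; in particular every
tautology of M⊃ has a proof. -/
theorem nd_completeness :
    (∀ (Δ : Finset MFormula) (β : MFormula), KEntails ↑Δ β →
        ∃ T : NDTree, T.concl [] = some β ∧ T.openAssum ⊆ Δ) ∧
    (∀ α : MFormula, (∀ (M : KModel) (w : M.World), KSat M α w) →
        ∃ T : NDTree, T.IsProofOf α) := by
  have completeness (Δ : Finset MFormula) (β : MFormula) (h : KEntails ↑Δ β) :
      ∃ T : NDTree, T.concl [] = some β ∧ T.openAssum ⊆ Δ := by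
    obtain ⟨T, hT, hTo⟩ := derivable_of_kEntails h
    exact ⟨T, hT, Finset.coe_subset.mp hTo⟩
  refine ⟨completeness, fun α hα => ?_⟩
  obtain ⟨T, hT, hTo⟩ := completeness ∅ α fun M w _ => hα M w
  exact ⟨T, hT, Finset.subset_empty.mp hTo⟩
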